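/- For every real u with 0 < u < 2 − √3, the series ∑_{x=0}^∞ (a(x+1,0) − a(x,0)) · u^{2x+1} converges and equals u · arccot( √3·(1+u²) / √(1 − 14u² + u⁴) ) / ( π · √(1 − 14u² + u⁴) ), where arccot takes values in (0, π/2) on positive arguments and 1 − 14u² + u⁴ > 0 for such u. In particular a(1,0) − a(0,0) = 1/6 and a(2,0) − a(1,0) = 7/6 − 2√3/π. -/

import Mathlib

open intervalIntegral

noncomputable def triPot (x y : ℤ) : ℝ :=
  (1 / (4 * Real.pi ^ 2)) *
    ∫ θ in (0 : ℝ)..(2 * Real.pi), ∫ φ in (0 : ℝ)..(2 * Real.pi),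
      (1 - Real.cos ((x : ℝ) * θ + (y : ℝ) * φ)) /
        (6 - 2 * Real.cos θ - 2 * Real.cos φ - 2 * Real.cos (θ + φ))

/-- The inverse cotangent, with values in `(0, π/2)` on positive arguments. -/
noncomputable def arccot (x : ℝ) : ℝ := Real.pi / 2 - Real.arctan x

/-!
Since `6 - 2 cos θ - 2 cos φ - 2 cos (θ + φ) = (6 - 2 cos θ) - 4 cos (θ/2) cos (φ + θ/2)`, the inner
integral is the classical `∫₀^{2π} dφ / (A - B cos φ) = 2π / √(A² - B²)`, and after the substitution
`θ = 2t` the increments become `a(n+1,0) - a(n,0) = (1/2π) ∫₀^π sin((2n+1)t) / √(3 + sin² t) dt`.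
Summing `∑ u^(2n+1) sin((2n+1)t) = Im (z / (1 - z²))`, `z = u e^{it}`, under the integral (dominated
by a geometric series) leaves an integrand with an elementary arctan antiderivative; the two special
values have antiderivatives built from `arcsin (cos t / 2)` and `cos t √(3 + sin² t)`.
-/

open Real MeasureTheory

lemma mul_cos_lt_of_abs_lt {A B : ℝ} (h : |B| < A) (φ : ℝ) : B * cos φ < A :=
  calc B * cos φ ≤ |B| * |cos φ| := by rw [← abs_mul]; exact le_abs_self _
    _ ≤ |B| := mul_le_of_le_one_right (abs_nonneg B) (abs_cos_le_one φ)
    _ < A := h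

-- Unlike the textbook `tan (φ/2)` substitution, this antiderivative is smooth on all of `ℝ`.
lemma hasDerivAt_antideriv_inv_sub_mul_cos {A B : ℝ} (h : |B| < A) (φ : ℝ) :
    HasDerivAt (fun φ => (φ + 2 * arctan (B * sin φ / (A + √(A ^ 2 - B ^ 2) - B * cos φ))) /
      √(A ^ 2 - B ^ 2)) (A - B * cos φ)⁻¹ φ := by
  set S := √(A ^ 2 - B ^ 2)
  have hS2 : S ^ 2 = A ^ 2 - B ^ 2 := sq_sqrt (by nlinarith [abs_nonneg B, sq_abs B])
  have hS : 0 < S := sqrt_pos.2 (by nlinarith [abs_nonneg B, sq_abs B])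
  have hD : A + S - B * cos φ ≠ 0 := by linarith [mul_cos_lt_of_abs_lt h φ]
  have hq := ((hasDerivAt_sin φ).const_mul B).div
    (((hasDerivAt_cos φ).const_mul B).const_sub (A + S)) hD
  refine (((hasDerivAt_id φ).add (hq.arctan.const_mul 2)).div_const S).congr_deriv ?_
  have hA : A - B * cos φ ≠ 0 := (sub_pos.2 (mul_cos_lt_of_abs_lt h φ)).ne'
  simp only [Pi.div_apply, div_pow]
  field_simp
  linear_combination (B ^ 3 * cos φ - A * B ^ 2 - S * B ^ 2) * sin_sq_add_cos_sq φ +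
    (B * cos φ - A - S) * hS2

theorem integral_inv_sub_mul_cos {A B : ℝ} (h : |B| < A) :
    ∫ φ in (0 : ℝ)..2 * π, (A - B * cos φ)⁻¹ = 2 * π / √(A ^ 2 - B ^ 2) := by
  have hcont : Continuous fun φ => (A - B * cos φ)⁻¹ :=
    (continuous_const.sub (continuous_const.mul continuous_cos)).inv₀ fun φ =>
      (sub_pos.2 (mul_cos_lt_of_abs_lt h φ)).ne'
  rw [integral_eq_sub_of_hasDerivAt (fun φ _ => hasDerivAt_antideriv_inv_sub_mul_cos h φ)
    (hcont.intervalIntegrable _ _)]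
  simp [sin_two_pi, cos_two_pi]

theorem integral_inv_sub_mul_cos_add {A B : ℝ} (h : |B| < A) (c : ℝ) :
    ∫ φ in (0 : ℝ)..2 * π, (A - B * cos (φ + c))⁻¹ = 2 * π / √(A ^ 2 - B ^ 2) := by
  have hper : Function.Periodic (fun φ => (A - B * cos φ)⁻¹) (2 * π) := fun φ => by
    simp only [cos_add_two_pi]
  rw [integral_comp_add_right (fun φ => (A - B * cos φ)⁻¹), zero_add, add_comm,
    hper.intervalIntegral_add_eq c 0, zero_add, integral_inv_sub_mul_cos h]

lemma triangular_symbol_eq (θ φ : ℝ) :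
    6 - 2 * cos θ - 2 * cos φ - 2 * cos (θ + φ) =
      (6 - 2 * cos θ) - 4 * cos (θ / 2) * cos (φ + θ / 2) := by
  have h := cos_add_cos φ (θ + φ)
  rw [show (φ + (θ + φ)) / 2 = φ + θ / 2 by ring, show (φ - (θ + φ)) / 2 = -(θ / 2) by ring,
    cos_neg] at h
  linear_combination -2 * h

theorem integral_inv_triangular_symbol {θ : ℝ} (hθ : cos θ < 1) :
    ∫ φ in (0 : ℝ)..2 * π, (6 - 2 * cos θ - 2 * cos φ - 2 * cos (θ + φ))⁻¹ =
      π / √((1 - cos θ) * (7 - cos θ)) := by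
  have hB2 : (4 * cos (θ / 2)) ^ 2 = 8 * (1 + cos θ) := by
    have h := cos_sq (θ / 2)
    rw [show 2 * (θ / 2) = θ by ring] at h
    linear_combination 16 * h
  have hlt : |4 * cos (θ / 2)| < 6 - 2 * cos θ := by
    refine abs_lt_of_sq_lt_sq ?_ (by linarith [cos_le_one θ])
    nlinarith
  have hfun : (fun φ => (6 - 2 * cos θ - 2 * cos φ - 2 * cos (θ + φ))⁻¹) =
      fun φ => ((6 - 2 * cos θ) - 4 * cos (θ / 2) * cos (φ + θ / 2))⁻¹ :=
    funext fun φ => by rw [triangular_symbol_eq]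
  rw [hfun, integral_inv_sub_mul_cos_add hlt, hB2,
    show (6 - 2 * cos θ) ^ 2 - 8 * (1 + cos θ) = 2 ^ 2 * ((1 - cos θ) * (7 - cos θ)) by ring,
    sqrt_mul (by norm_num), sqrt_sq (by norm_num), mul_div_mul_left _ _ two_ne_zero]

lemma abs_sin_nat_mul_le (n : ℕ) (x : ℝ) : |sin (n * x)| ≤ n * |sin x| := by
  induction n with
  | zero => simp
  | succ m ih =>
    rw [Nat.cast_succ, add_one_mul, sin_add]
    calc |sin (m * x) * cos x + cos (m * x) * sin x|
        ≤ |sin (m * x)| * |cos x| + |cos (m * x)| * |sin x| := by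
          rw [← abs_mul, ← abs_mul]; exact abs_add_le _ _
      _ ≤ |sin (m * x)| * 1 + 1 * |sin x| := by gcongr <;> exact abs_cos_le_one _
      _ ≤ ((m : ℝ) + 1) * |sin x| := by linarith

lemma one_sub_cos_nat_mul_le (k : ℕ) (θ : ℝ) : 1 - cos (k * θ) ≤ k ^ 2 * (1 - cos θ) := by
  obtain ⟨x, rfl⟩ : ∃ x, θ = 2 * x := ⟨θ / 2, by ring⟩
  have h := abs_sin_nat_mul_le k x
  rw [mul_left_comm, cos_two_mul_eq_one_sub, cos_two_mul_eq_one_sub, ← sq_abs (sin (k * x)),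
    ← sq_abs (sin x)]
  nlinarith [abs_nonneg (sin (k * x))]

noncomputable def triAxisIntegrand (k : ℕ) (θ : ℝ) : ℝ :=
  (1 - cos (k * θ)) * (π / √((1 - cos θ) * (7 - cos θ)))

lemma triAxisIntegrand_nonneg (k : ℕ) (θ : ℝ) : 0 ≤ triAxisIntegrand k θ :=
  mul_nonneg (sub_nonneg.2 (cos_le_one _)) (by positivity)

lemma triAxisIntegrand_le (k : ℕ) (θ : ℝ) : triAxisIntegrand k θ ≤ k ^ 2 * π := by
  have hc : 0 ≤ 1 - cos θ := sub_nonneg.2 (cos_le_one θ)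
  have hratio : (1 - cos θ) / √((1 - cos θ) * (7 - cos θ)) ≤ 1 :=
    div_le_one_of_le₀ (le_sqrt_of_sq_le (by nlinarith [neg_one_le_cos θ])) (sqrt_nonneg _)
  calc triAxisIntegrand k θ ≤ k ^ 2 * (1 - cos θ) * (π / √((1 - cos θ) * (7 - cos θ))) := by
        unfold triAxisIntegrand; gcongr; exact one_sub_cos_nat_mul_le k θ
    _ = k ^ 2 * π * ((1 - cos θ) / √((1 - cos θ) * (7 - cos θ))) := by ring
    _ ≤ k ^ 2 * π := mul_le_of_le_one_right (by positivity) hratio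

lemma intervalIntegrable_triAxisIntegrand (k : ℕ) (a b : ℝ) :
    IntervalIntegrable (triAxisIntegrand k) volume a b := by
  refine (intervalIntegrable_const (c := (k : ℝ) ^ 2 * π)).mono_fun'
    (by unfold triAxisIntegrand; fun_prop) (ae_of_all _ fun θ => ?_)
  dsimp only
  rw [norm_of_nonneg (triAxisIntegrand_nonneg k θ)]
  exact triAxisIntegrand_le k θ

lemma triPot_natCast_zero (k : ℕ) :
    triPot k 0 = 1 / (4 * π ^ 2) * ∫ θ in (0 : ℝ)..2 * π, triAxisIntegrand k θ := by
  unfold triPot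
  congr 1
  refine integral_congr_ae ?_
  filter_upwards [volume.ae_ne (2 * π)] with θ hne hθ
  rw [Set.uIoc_of_le two_pi_pos.le] at hθ
  have hcos : cos θ < 1 := (cos_le_one θ).lt_of_ne fun h => hθ.1.ne'
    ((cos_eq_one_iff_of_lt_of_lt (by linarith [hθ.1, two_pi_pos]) (hθ.2.lt_of_ne hne)).1 h)
  simp only [Int.cast_natCast, Int.cast_zero, zero_mul, add_zero, div_eq_mul_inv,
    intervalIntegral.integral_const_mul]
  rw [integral_inv_triangular_symbol hcos, triAxisIntegrand, div_eq_mul_inv]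

lemma triAxisIntegrand_succ_sub_two_mul (n : ℕ) {t : ℝ} (ht : 0 < sin t) :
    triAxisIntegrand (n + 1) (2 * t) - triAxisIntegrand n (2 * t) =
      π * (sin ((2 * n + 1) * t) / √(3 + sin t ^ 2)) := by
  have hsqrt : √((1 - cos (2 * t)) * (7 - cos (2 * t))) = 2 * sin t * √(3 + sin t ^ 2) := by
    rw [cos_two_mul_eq_one_sub, show (1 - (1 - 2 * sin t ^ 2)) * (7 - (1 - 2 * sin t ^ 2)) =
      (2 * sin t) ^ 2 * (3 + sin t ^ 2) by ring, sqrt_mul (by positivity), sqrt_sq (by positivity)]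
  have hcos :
      cos (n * (2 * t)) - cos ((n + 1) * (2 * t)) = 2 * sin ((2 * n + 1) * t) * sin t := by
    rw [cos_sub_cos, show (n * (2 * t) + (n + 1) * (2 * t)) / 2 = (2 * n + 1) * t by ring,
      show (n * (2 * t) - (n + 1) * (2 * t)) / 2 = -t by ring, sin_neg]
    ring
  rw [triAxisIntegrand, triAxisIntegrand, hsqrt, ← sub_mul, Nat.cast_succ,
    sub_sub_sub_cancel_left, hcos]
  field_simp

lemma triPot_succ_sub (n : ℕ) :
    triPot ((n : ℤ) + 1) 0 - triPot n 0 =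
      1 / (2 * π) * ∫ t in (0 : ℝ)..π, sin ((2 * n + 1) * t) / √(3 + sin t ^ 2) := by
  have hsub : ∫ θ in (0 : ℝ)..2 * π, (triAxisIntegrand (n + 1) θ - triAxisIntegrand n θ) =
      2 * ∫ t in (0 : ℝ)..π, (triAxisIntegrand (n + 1) (2 * t) - triAxisIntegrand n (2 * t)) := by
    rw [integral_comp_mul_left (fun θ => triAxisIntegrand (n + 1) θ - triAxisIntegrand n θ)
      two_ne_zero, mul_zero, smul_eq_mul, mul_inv_cancel_left₀ two_ne_zero]
  have hcongr :
      ∫ t in (0 : ℝ)..π, (triAxisIntegrand (n + 1) (2 * t) - triAxisIntegrand n (2 * t)) =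
        ∫ t in (0 : ℝ)..π, π * (sin ((2 * n + 1) * t) / √(3 + sin t ^ 2)) := by
    refine integral_congr_ae ?_
    filter_upwards [volume.ae_ne π] with t hne ht
    rw [Set.uIoc_of_le pi_pos.le] at ht
    exact triAxisIntegrand_succ_sub_two_mul n (sin_pos_of_pos_of_lt_pi ht.1 (ht.2.lt_of_ne hne))
  rw [← Nat.cast_succ, triPot_natCast_zero, triPot_natCast_zero, ← mul_sub,
    ← integral_sub (intervalIntegrable_triAxisIntegrand _ _ _)
      (intervalIntegrable_triAxisIntegrand _ _ _), hsub, hcongr,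
    intervalIntegral.integral_const_mul]
  field_simp
  ring

noncomputable def oddSinGF (u t : ℝ) : ℝ :=
  u * (1 + u ^ 2) * sin t / (1 - 2 * u ^ 2 * cos (2 * t) + u ^ 4)

lemma oddSinGF_denom_eq (u t : ℝ) :
    1 - 2 * u ^ 2 * cos (2 * t) + u ^ 4 = (1 + u ^ 2) ^ 2 - 4 * u ^ 2 * cos t ^ 2 := by
  rw [cos_two_mul]; ring

lemma oddSinGF_denom_pos {u : ℝ} (hu : u ^ 2 ≠ 1) (t : ℝ) :
    0 < 1 - 2 * u ^ 2 * cos (2 * t) + u ^ 4 := by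
  rw [oddSinGF_denom_eq]
  nlinarith [cos_sq_le_one t, sq_nonneg u, sq_pos_of_ne_zero (sub_ne_zero.2 hu.symm)]

lemma ofReal_mul_exp_mul_I_pow (u t : ℝ) (m : ℕ) :
    ((u : ℂ) * Complex.exp (t * Complex.I)) ^ m =
      ((u ^ m : ℝ) : ℂ) * Complex.exp ((m * t : ℝ) * Complex.I) := by
  rw [mul_pow, ← Complex.exp_nat_mul]
  push_cast
  ring_nf

lemma re_ofReal_mul_exp_mul_I_pow (u t : ℝ) (m : ℕ) :
    (((u : ℂ) * Complex.exp (t * Complex.I)) ^ m).re = u ^ m * cos (m * t) := by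
  rw [ofReal_mul_exp_mul_I_pow, Complex.re_ofReal_mul, Complex.exp_ofReal_mul_I_re]

lemma im_ofReal_mul_exp_mul_I_pow (u t : ℝ) (m : ℕ) :
    (((u : ℂ) * Complex.exp (t * Complex.I)) ^ m).im = u ^ m * sin (m * t) := by
  rw [ofReal_mul_exp_mul_I_pow, Complex.im_ofReal_mul, Complex.exp_ofReal_mul_I_im]

lemma hasSum_pow_mul_sin_odd {u : ℝ} (hu : |u| < 1) (t : ℝ) :
    HasSum (fun n : ℕ => u ^ (2 * n + 1) * sin ((2 * n + 1) * t)) (oddSinGF u t) := by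
  set z : ℂ := u * Complex.exp (t * Complex.I)
  have hre := re_ofReal_mul_exp_mul_I_pow u t
  have him := im_ofReal_mul_exp_mul_I_pow u t
  have hz2 : ‖z ^ 2‖ < 1 := by
    rw [ofReal_mul_exp_mul_I_pow, norm_mul, Complex.norm_exp_ofReal_mul_I, mul_one,
      Complex.norm_real, norm_pow, Real.norm_eq_abs]
    nlinarith [abs_nonneg u]
  have hgeo := ((hasSum_geometric_of_norm_lt_one hz2).mul_left z).mapL Complex.imCLM
  have hterm : ∀ n : ℕ,
      Complex.imCLM (z * (z ^ 2) ^ n) = u ^ (2 * n + 1) * sin ((2 * n + 1) * t) := by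
    intro n
    rw [← pow_mul, ← pow_succ', Complex.imCLM_apply, him]
    push_cast
    ring_nf
  simp only [hterm] at hgeo
  convert hgeo using 1
  have hN : Complex.normSq (1 - z ^ 2) = 1 - 2 * u ^ 2 * cos (2 * t) + u ^ 4 := by
    rw [Complex.normSq_apply, Complex.sub_re, Complex.sub_im, Complex.one_re, Complex.one_im, hre,
      him]
    push_cast
    linear_combination u ^ 4 * sin_sq_add_cos_sq (2 * t)
  obtain ⟨hre1, him1⟩ : z.re = u * cos t ∧ z.im = u * sin t := by
    simpa only [pow_one, Nat.cast_one, one_mul] using And.intro (hre 1) (him 1)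
  rw [oddSinGF, Complex.imCLM_apply, ← div_eq_mul_inv, Complex.div_im, hN, Complex.sub_re,
    Complex.sub_im, Complex.one_re, Complex.one_im, hre, him, hre1, him1, div_sub_div_same]
  push_cast
  rw [sin_two_mul, cos_two_mul]
  ring

lemma hasSum_integral_pow_mul_sin_odd_mul {u : ℝ} (hu : |u| < 1) {w : ℝ → ℝ} {a b : ℝ}
    (hw : IntervalIntegrable w volume a b) :
    HasSum (fun n : ℕ => ∫ t in a..b, u ^ (2 * n + 1) * sin ((2 * n + 1) * t) * w t)
      (∫ t in a..b, oddSinGF u t * w t) := by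
  have hgeo : Summable fun n : ℕ => |u| ^ (2 * n + 1) := by
    simp only [pow_succ, pow_mul]
    exact (summable_geometric_of_lt_one (by positivity) (by nlinarith [abs_nonneg u])).mul_right _
  refine hasSum_integral_of_dominated_convergence (fun n t => |u| ^ (2 * n + 1) * |w t|)
    (fun n => ((by fun_prop : Continuous fun t => u ^ (2 * n + 1) * sin ((2 * n + 1) * t))
      |>.aestronglyMeasurable).mul hw.def'.aestronglyMeasurable)
    (fun n => ae_of_all _ fun t _ => ?_) (ae_of_all _ fun t _ => hgeo.mul_right _) ?_
    (ae_of_all _ fun t _ => (hasSum_pow_mul_sin_odd hu t).mul_right (w t))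
  · rw [norm_mul, norm_mul, norm_pow, Real.norm_eq_abs, Real.norm_eq_abs, Real.norm_eq_abs]
    gcongr
    exact mul_le_of_le_one_right (by positivity) (abs_sin_le_one _)
  · simp_rw [tsum_mul_right]
    exact hw.norm.const_mul _

lemma hasDerivAt_sqrt_three_add_sin_sq (t : ℝ) :
    HasDerivAt (fun t => √(3 + sin t ^ 2)) (sin t * cos t / √(3 + sin t ^ 2)) t := by
  have := (((hasDerivAt_sin t).fun_pow 2).const_add 3).sqrt (by positivity)
  refine this.congr_deriv ?_
  field_simp
  ring

lemma hasDerivAt_arcsin_cos_div_two (t : ℝ) :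
    HasDerivAt (fun t => arcsin (cos t / 2)) (-(sin t / √(3 + sin t ^ 2))) t := by
  have hcos := abs_le.1 (abs_cos_le_one t)
  have := (hasDerivAt_arcsin (by linarith) (by linarith)).comp t ((hasDerivAt_cos t).div_const 2)
  refine this.congr_deriv ?_
  rw [show 1 - (cos t / 2) ^ 2 = (3 + sin t ^ 2) / 2 ^ 2 by
      linear_combination -(sin_sq_add_cos_sq t) / 4,
    sqrt_div' _ (by norm_num), sqrt_sq (by norm_num)]
  field_simp

lemma hasDerivAt_cos_div_sqrt_three_add_sin_sq (t : ℝ) :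
    HasDerivAt (fun t => cos t / √(3 + sin t ^ 2)) (-(4 * sin t) / √(3 + sin t ^ 2) ^ 3) t := by
  have hS : 0 < √(3 + sin t ^ 2) := sqrt_pos.2 (by positivity)
  refine ((hasDerivAt_cos t).div (hasDerivAt_sqrt_three_add_sin_sq t) hS.ne').congr_deriv ?_
  have hS2 : √(3 + sin t ^ 2) ^ 2 = 3 + sin t ^ 2 := sq_sqrt (by positivity)
  field_simp
  linear_combination (-sin t) * hS2 - sin t * sin_sq_add_cos_sq t

lemma continuous_sqrt_three_add_sin_sq : Continuous fun t => √(3 + sin t ^ 2) := by fun_prop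

lemma continuous_div_sqrt_three_add_sin_sq {f : ℝ → ℝ} (hf : Continuous f) :
    Continuous fun t => f t / √(3 + sin t ^ 2) :=
  hf.div₀ continuous_sqrt_three_add_sin_sq fun _ => (sqrt_pos.2 (by positivity)).ne'

lemma arcsin_one_half : arcsin (1 / 2) = π / 6 := by
  rw [← sin_pi_div_six, arcsin_sin] <;> linarith [pi_pos]

lemma integral_sin_div_sqrt_three_add_sin_sq :
    ∫ t in (0 : ℝ)..π, sin t / √(3 + sin t ^ 2) = π / 3 := by
  rw [integral_eq_sub_of_hasDerivAt (f := fun t => -arcsin (cos t / 2))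
    (fun t _ => by simpa using (hasDerivAt_arcsin_cos_div_two t).fun_neg)
    ((continuous_div_sqrt_three_add_sin_sq continuous_sin).intervalIntegrable _ _)]
  rw [cos_pi, cos_zero, neg_div, arcsin_neg, arcsin_one_half]
  ring

lemma integral_sin_three_mul_div_sqrt_three_add_sin_sq :
    ∫ t in (0 : ℝ)..π, sin (3 * t) / √(3 + sin t ^ 2) = 7 * π / 3 - 4 * √3 := by
  have hderiv : ∀ t,
      HasDerivAt (fun t => -7 * arcsin (cos t / 2) + 2 * cos t * √(3 + sin t ^ 2))
        (sin (3 * t) / √(3 + sin t ^ 2)) t := fun t => by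
    refine (((hasDerivAt_arcsin_cos_div_two t).const_mul (-7)).add
      (((hasDerivAt_cos t).const_mul 2).mul (hasDerivAt_sqrt_three_add_sin_sq t))).congr_deriv ?_
    have hS2 : √(3 + sin t ^ 2) ^ 2 = 3 + sin t ^ 2 := sq_sqrt (by positivity)
    rw [sin_three_mul]
    field_simp
    linear_combination (-2 * sin t) * hS2 + 2 * sin t * sin_sq_add_cos_sq t
  rw [integral_eq_sub_of_hasDerivAt (fun t _ => hderiv t)
    ((continuous_div_sqrt_three_add_sin_sq (by fun_prop)).intervalIntegrable _ _)]
  rw [cos_pi, cos_zero, sin_pi, sin_zero, neg_div, arcsin_neg, arcsin_one_half]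
  norm_num
  ring

theorem integral_oddSinGF_div_sqrt_three_add_sin_sq {u : ℝ} (hΔ : 0 < 1 - 14 * u ^ 2 + u ^ 4) :
    ∫ t in (0 : ℝ)..π, oddSinGF u t / √(3 + sin t ^ 2) =
      2 * u * arctan (√(1 - 14 * u ^ 2 + u ^ 4) / (√3 * (1 + u ^ 2))) /
        √(1 - 14 * u ^ 2 + u ^ 4) := by
  set d := √(1 - 14 * u ^ 2 + u ^ 4)
  have hd : 0 < d := sqrt_pos.2 hΔ
  have hd2 : d ^ 2 = 1 - 14 * u ^ 2 + u ^ 4 := sq_sqrt hΔ.le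
  have hu : u ^ 2 ≠ 1 := fun h => by nlinarith
  have hderiv : ∀ t, HasDerivAt
      (fun t => -(u / d) * arctan (d / (1 + u ^ 2) * (cos t / √(3 + sin t ^ 2))))
      (oddSinGF u t / √(3 + sin t ^ 2)) t := fun t => by
    refine ((((hasDerivAt_cos_div_sqrt_three_add_sin_sq t).const_mul
      (d / (1 + u ^ 2))).arctan).const_mul (-(u / d))).congr_deriv ?_
    have hS2 : √(3 + sin t ^ 2) ^ 2 = 3 + sin t ^ 2 := sq_sqrt (by positivity)
    have hW := oddSinGF_denom_pos hu t
    rw [oddSinGF_denom_eq] at hW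
    rw [oddSinGF, oddSinGF_denom_eq]
    -- `d² = 1 - 14u² + u⁴` is exactly what makes this a multiple of the denominator.
    have hkey : (1 + u ^ 2) ^ 2 * √(3 + sin t ^ 2) ^ 2 + d ^ 2 * cos t ^ 2 =
        4 * ((1 + u ^ 2) ^ 2 - 4 * u ^ 2 * cos t ^ 2) := by
      rw [hS2, hd2]; linear_combination (1 + u ^ 2) ^ 2 * sin_sq_add_cos_sq t
    field_simp
    rw [hkey, eq_div_iff (by linarith : (0 : ℝ) < (1 + u ^ 2) ^ 2 - u ^ 2 * cos t ^ 2 * 4).ne']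
    ring
  have hcont : Continuous fun t => oddSinGF u t / √(3 + sin t ^ 2) :=
    continuous_div_sqrt_three_add_sin_sq <| by
      unfold oddSinGF
      exact (by fun_prop : Continuous fun t => u * (1 + u ^ 2) * sin t).div₀ (by fun_prop)
        fun t => (oddSinGF_denom_pos hu t).ne'
  rw [integral_eq_sub_of_hasDerivAt (fun t _ => hderiv t) (hcont.intervalIntegrable _ _)]
  simp only [cos_pi, cos_zero, sin_pi, sin_zero]
  norm_num
  rw [neg_div, one_div, mul_neg, arctan_neg,
    show d / (1 + u ^ 2) * (√3)⁻¹ = d / (√3 * (1 + u ^ 2)) by field_simp]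
  ring

lemma hasSum_triPot_increment {u : ℝ} (hu : |u| < 1) :
    HasSum (fun n : ℕ => (triPot ((n : ℤ) + 1) 0 - triPot n 0) * u ^ (2 * n + 1))
      (1 / (2 * π) * ∫ t in (0 : ℝ)..π, oddSinGF u t / √(3 + sin t ^ 2)) := by
  have hw : Continuous fun t => (√(3 + sin t ^ 2))⁻¹ :=
    continuous_sqrt_three_add_sin_sq.inv₀ fun _ => (sqrt_pos.2 (by positivity)).ne'
  have := (hasSum_integral_pow_mul_sin_odd_mul hu (hw.intervalIntegrable 0 π)).mul_left
    (1 / (2 * π))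
  simp only [← div_eq_mul_inv, mul_div_assoc, intervalIntegral.integral_const_mul] at this
  refine this.congr_fun fun n => ?_
  rw [triPot_succ_sub]
  ring

lemma one_sub_fourteen_mul_sq_add_pow_four_pos {u : ℝ} (hu : |u| < 2 - √3) :
    0 < 1 - 14 * u ^ 2 + u ^ 4 := by
  have h3 : √3 ^ 2 = 3 := sq_sqrt (by norm_num)
  have h2 : u ^ 2 < 7 - 4 * √3 := by
    rw [← sq_abs]
    linear_combination pow_lt_pow_left₀ hu (abs_nonneg u) two_ne_zero + h3
  have hfac : 1 - 14 * u ^ 2 + u ^ 4 = (7 - 4 * √3 - u ^ 2) * (7 + 4 * √3 - u ^ 2) := by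
    linear_combination 16 * h3
  rw [hfac]
  exact mul_pos (by linarith) (by linarith [sqrt_nonneg 3])

lemma arccot_eq_arctan_inv {x : ℝ} (hx : 0 < x) : arccot x = arctan x⁻¹ := by
  rw [arccot, arctan_inv_of_pos hx]

/-- Generating function of the axis increments of the triangular-lattice potential
kernel: for `0 < u < 2 - √3`,
`∑_{x≥0} (a(x+1,0) - a(x,0))·u^{2x+1}
  = u · arccot(√3(1+u²)/√(1-14u²+u⁴)) / (π·√(1-14u²+u⁴))`;
in particular `a(1,0) - a(0,0) = 1/6` and `a(2,0) - a(1,0) = 7/6 - 2√3/π`. -/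
theorem triPot_increment_gf :
    (∀ u : ℝ, 0 < u → u < 2 - Real.sqrt 3 →
      0 < 1 - 14 * u ^ 2 + u ^ 4 ∧
      HasSum (fun x : ℕ => (triPot ((x : ℤ) + 1) 0 - triPot (x : ℤ) 0) * u ^ (2 * x + 1))
        (u * arccot (Real.sqrt 3 * (1 + u ^ 2) / Real.sqrt (1 - 14 * u ^ 2 + u ^ 4)) /
          (Real.pi * Real.sqrt (1 - 14 * u ^ 2 + u ^ 4)))) ∧
    triPot 1 0 - triPot 0 0 = 1 / 6 ∧
    triPot 2 0 - triPot 1 0 = 7 / 6 - 2 * Real.sqrt 3 / Real.pi := by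
  refine ⟨fun u hu0 hu => ?_, ?_, ?_⟩
  · have hΔ := one_sub_fourteen_mul_sq_add_pow_four_pos (by rwa [abs_of_pos hu0])
    have hu1 : |u| < 1 := by
      have : 1 < √3 := by rw [lt_sqrt zero_le_one]; norm_num
      rw [abs_of_pos hu0]; linarith
    refine ⟨hΔ, ?_⟩
    convert hasSum_triPot_increment hu1 using 1
    rw [integral_oddSinGF_div_sqrt_three_add_sin_sq hΔ, arccot_eq_arctan_inv (by positivity),
      inv_div]
    field_simp
  · have h := triPot_succ_sub 0
    norm_num at h
    rw [h, integral_sin_div_sqrt_three_add_sin_sq]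
    field_simp
    ring
  · have h := triPot_succ_sub 1
    norm_num at h
    rw [h, integral_sin_three_mul_div_sqrt_three_add_sin_sq]
    field_simp
    ring
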